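/- Let t = 0 < s be integers (a vertex of type 8^0). Let M be the matrix with rows (1, 0, 0), (x, 1, k), (0, 0, 1), where x ∈ 𝒫/𝒫^{s} and k ∈ 𝒪/𝒫^{s-t}. Then M represents a γ-fixed point at the vertex (s,t) if and only if v(x) ≥ s − m and v(k) ≥ s − t − n. -/

import Mathlib

/-!
With `N = M · x_{(s,t)}` invertible, the matrix `C` in `γ N = N C` is forced to be `N⁻¹ γ N`, which
is `diag(u₁, u₂, u₃)` plus the two middle-row entries `(u₂ - u₁) x π^{-s}` and
`(u₂ - u₃) k π^{t-s}`. Its determinant `u₁ u₂ u₃` is a unit, so it lies in `GL₃(𝒪)` exactly when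
these two entries are integral, i.e. when `v(x) ≥ s - m` and `v(k) ≥ s - t - n`.
-/

noncomputable section

/-- The element π of F = K((π)). -/
def pp (K : Type*) [Field K] : LaurentSeries K := HahnSeries.single (1 : ℤ) (1 : K)

/-- The π-adic valuation on F = K((π)), with v(0) = ⊤. -/
def vv {K : Type*} [Field K] (x : LaurentSeries K) : WithTop ℤ := x.orderTop

/-- x ∈ 𝒫^r, i.e. v(x) ≥ r. -/
def inP {K : Type*} [Field K] (r : ℤ) (x : LaurentSeries K) : Prop := (r : WithTop ℤ) ≤ vv x

/-- x ∈ 𝒫^r/𝒫^{r'} : x is a polynomial x_r π^r + ⋯ + x_{r'-1} π^{r'-1} (possibly 0). -/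
def inPQ {K : Type*} [Field K] (r r' : ℤ) (x : LaurentSeries K) : Prop :=
  inP r x ∧ ∀ i : ℤ, r' ≤ i → x.coeff i = 0

/-- Membership in GL₃(𝒪): entries in 𝒪 and determinant a unit of 𝒪. -/
def inGLO {K : Type*} [Field K] (C : Matrix (Fin 3) (Fin 3) (LaurentSeries K)) : Prop :=
  (∀ i j, inP 0 (C i j)) ∧ vv C.det = 0

/-- The matrix x_{(s,t)} = diag(1, π^s, π^t). -/
def xst (K : Type*) [Field K] (s t : ℤ) : Matrix (Fin 3) (Fin 3) (LaurentSeries K) :=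
  Matrix.diagonal ![1, pp K ^ s, pp K ^ t]

/-- Membership in the subgroup I^a of GL₃(F). -/
def inIa {K : Type*} [Field K] (a : ℤ) (g : Matrix (Fin 3) (Fin 3) (LaurentSeries K)) : Prop :=
  g.det ≠ 0 ∧
  vv (g 0 0) = 0 ∧ vv (g 1 1) = 0 ∧ vv (g 2 2) = 0 ∧
  inP (-a) (g 0 1) ∧ inP (-a) (g 0 2) ∧ inP 0 (g 1 2) ∧
  inP (a + 1) (g 1 0) ∧ inP (a + 1) (g 2 0) ∧ inP 1 (g 2 1)

/-- Membership in x_{(s,t)}·GL₃(𝒪)·x_{(s,t)}⁻¹. -/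
def inConj {K : Type*} [Field K] (s t : ℤ) (g : Matrix (Fin 3) (Fin 3) (LaurentSeries K)) : Prop :=
  ∃ C, inGLO C ∧ g = xst K s t * C * (xst K s t)⁻¹

/-- M represents a γ-fixed point at the vertex (s,t): there is C ∈ GL₃(𝒪) with
γ·M·x_{(s,t)} = M·x_{(s,t)}·C. -/
def reprFixed {K : Type*} [Field K] (γ M : Matrix (Fin 3) (Fin 3) (LaurentSeries K))
    (s t : ℤ) : Prop :=
  ∃ C, inGLO C ∧ γ * (M * xst K s t) = M * xst K s t * C

open HahnSeries

section

variable {K : Type*} [Field K]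

lemma pp_ne_zero : pp K ≠ 0 :=
  single_ne_zero one_ne_zero

lemma vv_mul (a b : LaurentSeries K) : vv (a * b) = vv a + vv b :=
  orderTop_mul a b

lemma vv_pp_zpow (r : ℤ) : vv (pp K ^ r) = r := by
  rw [vv, pp, ← RatFunc.single_zpow]
  exact orderTop_single one_ne_zero

lemma vv_sub_comm (u w : LaurentSeries K) : vv (u - w) = vv (w - u) := by
  rw [vv, vv, ← orderTop_neg, neg_sub]

lemma vv_sub_eq_vv_one_sub_div {u w : LaurentSeries K} (hu : vv u = 0) :
    vv (u - w) = vv (1 - w / u) := by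
  have hu0 : u ≠ 0 := by
    rintro rfl
    simp [vv] at hu
  rw [show u - w = u * (1 - w / u) by field_simp, vv_mul, hu, zero_add]

lemma inP_zero_mul_mul_zpow_neg_iff {d y : LaurentSeries K} {m : ℤ} (hd : vv d = m) (r : ℤ) :
    inP 0 (d * y * pp K ^ (-r)) ↔ ((r - m : ℤ) : WithTop ℤ) ≤ vv y := by
  rw [inP, vv_mul, vv_mul, hd, vv_pp_zpow]
  induction vv y using WithTop.recTopCoe with
  | top => simp
  | coe a =>
    norm_cast
    omega

lemma inGLO_middleRow_iff {u₁ u₂ u₃ a b : LaurentSeries K}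
    (h₁ : vv u₁ = 0) (h₂ : vv u₂ = 0) (h₃ : vv u₃ = 0) :
    inGLO !![u₁, 0, 0; a, u₂, b; 0, 0, u₃] ↔ inP 0 a ∧ inP 0 b := by
  refine ⟨fun h => ⟨h.1 1 0, h.1 1 2⟩, fun ⟨ha, hb⟩ => ⟨fun i j => ?_, ?_⟩⟩
  · fin_cases i <;> fin_cases j <;> simp_all [inP, vv]
  · simp [Matrix.det_fin_three, vv_mul, h₁, h₂, h₃]

lemma exists_inGLO_mul_eq_iff {γ N C₀ : Matrix (Fin 3) (Fin 3) (LaurentSeries K)}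
    (hN : IsUnit N.det) (hC₀ : γ * N = N * C₀) :
    (∃ C, inGLO C ∧ γ * N = N * C) ↔ inGLO C₀ := by
  refine ⟨fun ⟨C, hC, hγ⟩ => ?_, fun h => ⟨C₀, h, hC₀⟩⟩
  rwa [((Matrix.isUnit_iff_isUnit_det N).mpr hN).mul_left_cancel (hC₀.symm.trans hγ)]

lemma mul_xst (x k : LaurentSeries K) (s t : ℤ) :
    !![1, 0, 0; x, 1, k; 0, 0, 1] * xst K s t =
      !![1, 0, 0; x, pp K ^ s, k * pp K ^ t; 0, 0, pp K ^ t] :=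
  Matrix.ext fun i j => by fin_cases i <;> fin_cases j <;> simp [xst, Matrix.mul_diagonal]

lemma isUnit_det_mul_xst (x k : LaurentSeries K) (s t : ℤ) :
    IsUnit (!![1, 0, 0; x, 1, k; 0, 0, 1] * xst K s t).det := by
  rw [mul_xst]
  simp [Matrix.det_fin_three, zpow_ne_zero, pp_ne_zero]

lemma diagonal_mul_mul_xst (u₁ u₂ u₃ x k : LaurentSeries K) (s t : ℤ) :
    Matrix.diagonal ![u₁, u₂, u₃] * (!![1, 0, 0; x, 1, k; 0, 0, 1] * xst K s t) =
      !![1, 0, 0; x, 1, k; 0, 0, 1] * xst K s t *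
        !![u₁, 0, 0;
          (u₂ - u₁) * x * pp K ^ (-s), u₂, (u₂ - u₃) * k * pp K ^ (-(s - t));
          0, 0, u₃] := by
  have hs : pp K ^ s * (pp K ^ s)⁻¹ = 1 := mul_inv_cancel₀ (zpow_ne_zero s pp_ne_zero)
  have hst : pp K ^ s * pp K ^ (t - s) = pp K ^ t := by
    rw [← zpow_add₀ pp_ne_zero, add_sub_cancel]
  rw [mul_xst]
  refine Matrix.ext fun i j => ?_
  fin_cases i <;> fin_cases j <;>
    simp [Matrix.mul_apply, Fin.sum_univ_three] <;>
    first
      | ring1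
      | linear_combination (x * (u₁ - u₂)) * hs
      | linear_combination (k * (u₃ - u₂)) * hst

end

theorem stmt8_general (K : Type*) [Field K]
    (u₁ u₂ u₃ : LaurentSeries K) (m n : ℤ)
    (hu₁ : vv u₁ = 0) (hu₂ : vv u₂ = 0) (hu₃ : vv u₃ = 0)
    (hv₁₂ : vv (1 - u₁ / u₂) = (m : WithTop ℤ))
    (hv₂₃ : vv (1 - u₂ / u₃) = (n : WithTop ℤ))
    (s t : ℤ)
    (x k : LaurentSeries K) :
    reprFixed (Matrix.diagonal ![u₁, u₂, u₃]) !![1, 0, 0; x, 1, k; 0, 0, 1] s t ↔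
      (((s - m : ℤ) : WithTop ℤ) ≤ vv x ∧ ((s - t - n : ℤ) : WithTop ℤ) ≤ vv k) := by
  have h₂₁ : vv (u₂ - u₁) = m := by rw [vv_sub_eq_vv_one_sub_div hu₂, hv₁₂]
  have h₂₃ : vv (u₂ - u₃) = n := by rw [vv_sub_comm, vv_sub_eq_vv_one_sub_div hu₃, hv₂₃]
  rw [reprFixed, exists_inGLO_mul_eq_iff (isUnit_det_mul_xst x k s t)
      (diagonal_mul_mul_xst u₁ u₂ u₃ x k s t), inGLO_middleRow_iff hu₁ hu₂ hu₃,
    inP_zero_mul_mul_zpow_neg_iff h₂₁, inP_zero_mul_mul_zpow_neg_iff h₂₃]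

theorem stmt8 (K : Type*) [Field K]
    (u₁ u₂ u₃ : LaurentSeries K) (m n : ℤ)
    (hu₁ : vv u₁ = 0) (hu₂ : vv u₂ = 0) (hu₃ : vv u₃ = 0)
    (h₁₂ : u₁ ≠ u₂) (h₁₃ : u₁ ≠ u₃) (h₂₃ : u₂ ≠ u₃)
    (hm : 0 ≤ m) (hmn : m ≤ n)
    (hv₁₂ : vv (1 - u₁ / u₂) = (m : WithTop ℤ))
    (hv₁₃ : vv (1 - u₁ / u₃) = (m : WithTop ℤ))
    (hv₂₃ : vv (1 - u₂ / u₃) = (n : WithTop ℤ))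
    (s t : ℤ) (ht : t = 0) (hs : 0 < s)
    (x k : LaurentSeries K) (hx : inPQ 1 s x) (hk : inPQ 0 (s - t) k) :
    reprFixed (Matrix.diagonal ![u₁, u₂, u₃]) !![1, 0, 0; x, 1, k; 0, 0, 1] s t ↔
      (((s - m : ℤ) : WithTop ℤ) ≤ vv x ∧ ((s - t - n : ℤ) : WithTop ℤ) ≤ vv k) :=
  stmt8_general K u₁ u₂ u₃ m n hu₁ hu₂ hu₃ hv₁₂ hv₂₃ s t x k
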